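/- Let r ∈ ℂ and define the shadow operator ξ_r by (ξ_r F)(z) = 2i y^{r̄} · conj(∂F/∂z̄ (z)) for F ∈ C²(U), U ⊂ ℍ open, y = Im z. Then F is r-harmonic on U (i.e. Δ_r F = 0 where Δ_r = -4y² ∂²/∂z∂z̄ + 2ir y ∂/∂z̄) if and only if ξ_r F is holomorphic on U. -/

import Mathlib

/-- Wirtinger derivative `∂/∂z̄ = (1/2)(∂/∂x + i ∂/∂y)` of `F : ℂ → ℂ` (as an
ℝ-differentiable map). -/
noncomputable def wderivBar (F : ℂ → ℂ) (z : ℂ) : ℂ :=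
  (fderiv ℝ F z 1 + Complex.I * fderiv ℝ F z Complex.I) / 2

/-- Wirtinger derivative `∂/∂z = (1/2)(∂/∂x - i ∂/∂y)`. -/
noncomputable def wderiv (F : ℂ → ℂ) (z : ℂ) : ℂ :=
  (fderiv ℝ F z 1 - Complex.I * fderiv ℝ F z Complex.I) / 2

/-- The operator `Δ_r = -4y² ∂²/∂z∂z̄ + 2iry ∂/∂z̄`. -/
noncomputable def hlaplacian (r : ℂ) (F : ℂ → ℂ) (z : ℂ) : ℂ :=
  -4 * (z.im : ℂ) ^ 2 * wderiv (fun w => wderivBar F w) z +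
    2 * Complex.I * r * (z.im : ℂ) * wderivBar F z

/-- The shadow operator `(ξ_r F)(z) = 2i y^r̄ conj(∂F/∂z̄ (z))`. -/
noncomputable def shadowOp (r : ℂ) (F : ℂ → ℂ) (z : ℂ) : ℂ :=
  2 * Complex.I * ((z.im : ℂ) ^ (starRingEnd ℂ r)) * (starRingEnd ℂ) (wderivBar F z)

/-!
The Leibniz and chain rules for `∂/∂z̄`, together with `∂/∂z̄ (y ^ c) = (i/2) c y ^ (c - 1)`,
give the identity `∂/∂z̄ (ξ_r F) = -(i/2) y ^ (r̄ - 2) · conj (Δ_r F)`. Its prefactor does not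
vanish on the upper half-plane, and by Cauchy–Riemann a real-differentiable function is
holomorphic exactly where its `∂/∂z̄` vanishes; `C²` is what makes `ξ_r F` real-differentiable.
-/

open Complex ComplexConjugate

theorem wderivBar_eq_zero_iff {f : ℂ → ℂ} {z : ℂ} :
    wderivBar f z = 0 ↔ fderiv ℝ f z I = I • fderiv ℝ f z 1 := by
  rw [wderivBar, smul_eq_mul]
  constructor <;> intro h
  · linear_combination (-2 * I) * h + fderiv ℝ f z I * I_sq
  · linear_combination I / 2 * h + fderiv ℝ f z 1 / 2 * I_sq

theorem differentiableAt_complex_iff_wderivBar_eq_zero {f : ℂ → ℂ} {z : ℂ}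
    (hf : DifferentiableAt ℝ f z) : DifferentiableAt ℂ f z ↔ wderivBar f z = 0 := by
  rw [differentiableAt_complex_iff_differentiableAt_real, wderivBar_eq_zero_iff, and_iff_right hf]

theorem HasFDerivAt.wderivBar_eq {f : ℂ → ℂ} {L : ℂ →L[ℝ] ℂ} {z : ℂ} (h : HasFDerivAt f L z) :
    wderivBar f z = (L 1 + I * L I) / 2 := by
  rw [wderivBar, h.fderiv]

theorem wderivBar_mul {f g : ℂ → ℂ} {z : ℂ} (hf : DifferentiableAt ℝ f z)
    (hg : DifferentiableAt ℝ g z) :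
    wderivBar (fun w => f w * g w) z = f z * wderivBar g z + wderivBar f z * g z := by
  rw [(hf.hasFDerivAt.fun_mul hg.hasFDerivAt).wderivBar_eq, wderivBar, wderivBar]
  simp only [add_apply, smul_apply, smul_eq_mul]
  ring

theorem wderivBar_const_mul (a : ℂ) {f : ℂ → ℂ} {z : ℂ} (hf : DifferentiableAt ℝ f z) :
    wderivBar (fun w => a * f w) z = a * wderivBar f z := by
  rw [wderivBar_mul (differentiableAt_const a) hf]
  simp [wderivBar]

theorem wderivBar_conj {f : ℂ → ℂ} {z : ℂ} (hf : DifferentiableAt ℝ f z) :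
    wderivBar (fun w => conj (f w)) z = conj (wderiv f z) := by
  have hconj : HasFDerivAt (fun w => conj (f w)) _ z := hf.hasFDerivAt.star
  rw [hconj.wderivBar_eq, wderiv]
  simp only [ContinuousLinearMap.comp_apply, ContinuousLinearEquiv.coe_coe, starL'_apply,
    star_def, map_div₀, map_sub, map_mul, conj_I, map_ofNat]
  ring

theorem hasFDerivAt_im_cpow (c : ℂ) {z : ℂ} (hz : 0 < z.im) :
    HasFDerivAt (fun w : ℂ => (w.im : ℂ) ^ c)
      ((c * (z.im : ℂ) ^ (c - 1)) • (ofRealCLM ∘L imCLM)) z :=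
  (hasStrictDerivAt_cpow_const (ofReal_mem_slitPlane.2 hz)).hasDerivAt.comp_hasFDerivAt
    (f := fun w : ℂ => (w.im : ℂ)) z (ofRealCLM ∘L imCLM).hasFDerivAt

theorem wderivBar_im_cpow (c : ℂ) {z : ℂ} (hz : 0 < z.im) :
    wderivBar (fun w : ℂ => (w.im : ℂ) ^ c) z = I / 2 * c * (z.im : ℂ) ^ (c - 1) := by
  rw [(hasFDerivAt_im_cpow c hz).wderivBar_eq]
  simp only [smul_apply, ContinuousLinearMap.comp_apply, imCLM_apply, ofRealCLM_apply, one_im,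
    I_im, ofReal_zero, ofReal_one, smul_eq_mul, mul_zero, mul_one, zero_add]
  ring

theorem ContDiffAt.differentiableAt_wderivBar {F : ℂ → ℂ} {z : ℂ} {n : WithTop ℕ∞}
    (hF : ContDiffAt ℝ n F z) (hn : 2 ≤ n) : DifferentiableAt ℝ (wderivBar F) z := by
  have hDF : ContDiffAt ℝ 1 (fderiv ℝ F) z := hF.fderiv_right hn
  have hF' : ContDiffAt ℝ 1 (wderivBar F) z :=
    ((hDF.clm_apply contDiffAt_const).add
      (contDiffAt_const.mul (hDF.clm_apply contDiffAt_const))).div_const 2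
  exact hF'.differentiableAt one_ne_zero

section shadow

variable (r : ℂ) {F : ℂ → ℂ} {z : ℂ}

theorem differentiableAt_shadowOp (hz : 0 < z.im)
    (hF : DifferentiableAt ℝ (wderivBar F) z) : DifferentiableAt ℝ (shadowOp r F) z :=
  ((hasFDerivAt_im_cpow (conj r) hz).differentiableAt.const_mul (2 * I)).mul hF.star

theorem wderivBar_shadowOp (hz : 0 < z.im) (hF : DifferentiableAt ℝ (wderivBar F) z) :
    wderivBar (shadowOp r F) z =
      -(I / 2) * (z.im : ℂ) ^ (conj r - 2) * conj (hlaplacian r F z) := by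
  have hy : (z.im : ℂ) ≠ 0 := ofReal_ne_zero.2 hz.ne'
  have hpow := (hasFDerivAt_im_cpow (conj r) hz).differentiableAt
  have hconj : DifferentiableAt ℝ (fun w => conj (wderivBar F w)) z := hF.star
  change wderivBar (fun w => 2 * I * (w.im : ℂ) ^ conj r * conj (wderivBar F w)) z = _
  rw [wderivBar_mul (hpow.const_mul _) hconj, wderivBar_const_mul _ hpow,
    wderivBar_im_cpow _ hz, wderivBar_conj hF, hlaplacian, cpow_sub _ _ hy, cpow_sub _ _ hy,
    cpow_one, cpow_two]
  simp only [map_add, map_mul, map_pow, map_neg, map_ofNat, conj_ofReal, conj_I]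
  field_simp
  ring

theorem differentiableAt_complex_shadowOp_iff (hz : 0 < z.im)
    (hF : DifferentiableAt ℝ (wderivBar F) z) :
    DifferentiableAt ℂ (shadowOp r F) z ↔ hlaplacian r F z = 0 := by
  have hy : (z.im : ℂ) ≠ 0 := ofReal_ne_zero.2 hz.ne'
  rw [differentiableAt_complex_iff_wderivBar_eq_zero (differentiableAt_shadowOp r hz hF),
    wderivBar_shadowOp r hz hF]
  simp [I_ne_zero, cpow_eq_zero_iff, hy]

end shadow

/-- a `C²` function `F` on an open `U ⊆ ℍ` is `r`-harmonic (`Δ_r F = 0`)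
iff its shadow `ξ_r F` is holomorphic on `U`. -/
theorem r_harmonic_iff_shadow_holomorphic (r : ℂ) (U : Set ℂ) (hU : IsOpen U)
    (hUH : U ⊆ {z : ℂ | 0 < z.im}) (F : ℂ → ℂ) (hF : ContDiffOn ℝ 2 F U) :
    (∀ z ∈ U, hlaplacian r F z = 0) ↔ DifferentiableOn ℂ (shadowOp r F) U := by
  have hshadow : ∀ z ∈ U, DifferentiableAt ℂ (shadowOp r F) z ↔ hlaplacian r F z = 0 :=
    fun z hz => differentiableAt_complex_shadowOp_iff r (hUH hz)
      ((hF.contDiffAt (hU.mem_nhds hz)).differentiableAt_wderivBar le_rfl)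
  exact ⟨fun h z hz => ((hshadow z hz).2 (h z hz)).differentiableWithinAt,
    fun h z hz => (hshadow z hz).1 ((h z hz).differentiableAt (hU.mem_nhds hz))⟩
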